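/- arXiv:1401.5711 — 2 statements merged into one kernel-verified Lean document; each statement's English description precedes it below -/
import Mathlib

section
/- The centralizer of any nontrivial element of a free group is an infinite cyclic group. -/
/-!
By Nielsen–Schreier the centralizer `H` of `g` is free, and `g` is a nontrivial central element
of `H`. In a free group, an element `z` commuting with a basis element `x` is a power of `x`:
the subgroup generated by `z` and `x` is free and abelian, hence cyclic, and counting exponents
of `x` shows that `x` itself generates it. As `⟨x⟩ ∩ ⟨y⟩ = 1` for distinct basis elements, a free
group with a nontrivial central element has exactly one basis element, so it is `ℤ`.
-/

open Subgroup

namespace FreeGroup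

variable {X : Type*}

theorem not_commute_of_of_ne {a b : X} (hab : a ≠ b) : ¬Commute (of a) (of b) := by
  classical
  intro h
  have := congrArg toWord h.eq
  simp [toWord_mul, toWord_of, reduce.cons, hab] at this

theorem subsingleton_of_isMulCommutative [IsMulCommutative (FreeGroup X)] : Subsingleton X :=
  ⟨fun _ _ => by_contra fun hab => not_commute_of_of_ne hab (mul_comm' _ _)⟩

section exponentSum

variable [DecidableEq X]

def exponentSum (u : X) : FreeGroup X →* Multiplicative ℤ :=
  FreeGroup.lift (Pi.mulSingle u (.ofAdd 1))

@[simp]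
theorem exponentSum_of_self (u : X) : exponentSum u (of u) = .ofAdd 1 := by
  simp [exponentSum]

theorem exponentSum_of_of_ne {u v : X} (h : v ≠ u) : exponentSum u (of v) = 1 := by
  simp [exponentSum, h]

end exponentSum

end FreeGroup

namespace IsFreeGroup

variable {G : Type*} [Group G] [IsFreeGroup G]

theorem isCyclic_of_isMulCommutative [IsMulCommutative G] : IsCyclic G := by
  have : IsMulCommutative (FreeGroup (Generators G)) :=
    .of_comm fun x y => (toFreeGroup G).symm.injective (by simp [mul_comm'])
  have := FreeGroup.subsingleton_of_isMulCommutative (X := Generators G)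
  refine (toFreeGroup G).isCyclic.mpr ?_
  cases isEmpty_or_nonempty (Generators G) with
  | inl _ => infer_instance
  | inr h => have := uniqueOfSubsingleton h.some; infer_instance

end IsFreeGroup

namespace FreeGroup

variable {X : Type*}

theorem mem_zpowers_of_commute_of {z : FreeGroup X} {u : X} (h : Commute z (of u)) :
    z ∈ zpowers (of u) := by
  classical
  set K := closure ({z, of u} : Set (FreeGroup X))
  have : IsMulCommutative K := isMulCommutative_closure (by
    simp only [Set.mem_insert_iff, Set.mem_singleton_iff]
    rintro x (rfl | rfl) y (rfl | rfl)
    exacts [rfl, h.eq, h.symm.eq, rfl])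
  have := IsFreeGroup.isCyclic_of_isMulCommutative (G := K)
  obtain ⟨w, hw⟩ := IsCyclic.exists_generator (α := K)
  -- `of u = w ^ k` forces `k = ±1` after counting exponents of `u`.
  obtain ⟨k, hk⟩ := hw ⟨of u, subset_closure (by simp)⟩
  obtain ⟨m, hm⟩ := hw ⟨z, subset_closure (by simp)⟩
  replace hk : (w : FreeGroup X) ^ k = of u := congrArg Subtype.val hk
  replace hm : (w : FreeGroup X) ^ m = z := congrArg Subtype.val hm
  have hk1 : k * (exponentSum u w).toAdd = 1 := by
    simpa [toAdd_zpow] using congrArg (fun x => (exponentSum u x).toAdd) hk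
  have hkk : k * k = 1 := by rcases Int.eq_one_or_neg_one_of_mul_eq_one hk1 with rfl | rfl <;> rfl
  refine ⟨k * m, ?_⟩
  dsimp only
  rw [← hm, ← hk, ← zpow_mul, ← mul_assoc, hkk, one_mul]

theorem eq_one_of_commute_of_of_ne {z : FreeGroup X} {u v : X} (huv : u ≠ v)
    (hu : Commute z (of u)) (hv : Commute z (of v)) : z = 1 := by
  classical
  obtain ⟨m, rfl⟩ := mem_zpowers_iff.mp (mem_zpowers_of_commute_of hu)
  obtain ⟨n, hn⟩ := mem_zpowers_iff.mp (mem_zpowers_of_commute_of hv)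
  have hm : m = 0 := by
    simpa [exponentSum_of_of_ne huv.symm, ← ofAdd_zsmul] using
      (congrArg (exponentSum u) hn).symm
  rw [hm, zpow_zero]

end FreeGroup

namespace IsFreeGroup

variable {G : Type*} [Group G] [IsFreeGroup G]

theorem nonempty_mulEquiv_int_of_mem_center {z : G} (hz : z ∈ center G) (hz1 : z ≠ 1) :
    Nonempty (G ≃* Multiplicative ℤ) := by
  set e := toFreeGroup G
  have hez : e z ≠ 1 := by simpa using hz1
  have hcomm (x : FreeGroup (Generators G)) : Commute (e z) x := by
    simpa using (Commute.map (mem_center_iff.mp hz (e.symm x)).symm e)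
  have : Subsingleton (Generators G) :=
    ⟨fun _ _ => by_contra fun huv =>
      hez (FreeGroup.eq_one_of_commute_of_of_ne huv (hcomm _) (hcomm _))⟩
  have : Nonempty (Generators G) := by
    by_contra! h
    exact hez (Subsingleton.elim _ _)
  have := uniqueOfSubsingleton this.some
  exact ⟨e.trans FreeGroup.mulEquivIntOfUnique⟩

end IsFreeGroup

theorem stmt_4 (α : Type) (g : FreeGroup α) (hg : g ≠ 1) :
    Nonempty ((Subgroup.centralizer ({g} : Set (FreeGroup α))) ≃* Multiplicative ℤ) := by
  have hg_mem : g ∈ centralizer {g} := mem_centralizer_singleton_iff.mpr rfl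
  refine IsFreeGroup.nonempty_mulEquiv_int_of_mem_center (z := ⟨g, hg_mem⟩) ?_ (by simpa using hg)
  exact mem_center_iff.mpr fun x => Subtype.ext (mem_centralizer_singleton_iff.mp x.2)
end

section
/- In the free group F₂ on generators a and b, the commutator [a, b] is not a proper power: there is no element z ∈ F₂ and integer n ≥ 2 with [a, b] = zⁿ. -/
/-! Map `F₂` to the integral Heisenberg group by `a ↦ (1,0,0)`, `b ↦ (0,1,0)`. Then `[a, b]`
goes to the central generator `(0,0,1)`, while an `n`-th power of `(x,y,t)` is
`(n x, n y, n t + C(n,2) x y)`. Equating these forces `x = 0` and then `n t = 1`, impossible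
for `n ≥ 2`. -/

open scoped commutatorElement

section Heisenberg

variable {R : Type*} [CommRing R]

def heisenbergMatrix (x y t : R) : Matrix (Fin 3) (Fin 3) R := !![1, x, t; 0, 1, y; 0, 0, 1]

theorem heisenbergMatrix_mul (x y t x' y' t' : R) :
    heisenbergMatrix x y t * heisenbergMatrix x' y' t' =
      heisenbergMatrix (x + x') (y + y') (t + t' + x * y') := by
  ext i j
  fin_cases i <;> fin_cases j <;>
    simp [heisenbergMatrix, Matrix.mul_apply, Fin.sum_univ_succ] <;> ring

theorem heisenbergMatrix_zero : heisenbergMatrix (0 : R) 0 0 = 1 := by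
  ext i j
  fin_cases i <;> fin_cases j <;> simp [heisenbergMatrix]

theorem heisenbergMatrix_inj {x y t x' y' t' : R} :
    heisenbergMatrix x y t = heisenbergMatrix x' y' t' ↔ x = x' ∧ y = y' ∧ t = t' := by
  refine ⟨fun h => ⟨?_, ?_, ?_⟩, by rintro ⟨rfl, rfl, rfl⟩; rfl⟩
  · simpa [heisenbergMatrix] using congrFun (congrFun h 0) 1
  · simpa [heisenbergMatrix] using congrFun (congrFun h 1) 2
  · simpa [heisenbergMatrix] using congrFun (congrFun h 0) 2

theorem heisenbergMatrix_pow (x y t : R) (n : ℕ) :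
    heisenbergMatrix x y t ^ n =
      heisenbergMatrix (n * x) (n * y) (n * t + n.choose 2 * (x * y)) := by
  induction n with
  | zero => simp [heisenbergMatrix_zero]
  | succ n ih =>
    rw [pow_succ, ih, heisenbergMatrix_mul, Nat.choose_succ_succ, Nat.choose_one_right]
    congr 1 <;> push_cast <;> ring

def heisenbergUnit (x y t : R) : (Matrix (Fin 3) (Fin 3) R)ˣ where
  val := heisenbergMatrix x y t
  inv := heisenbergMatrix (-x) (-y) (x * y - t)
  val_inv := by rw [heisenbergMatrix_mul, ← heisenbergMatrix_zero]; congr 1 <;> ring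
  inv_val := by rw [heisenbergMatrix_mul, ← heisenbergMatrix_zero]; congr 1 <;> ring

theorem heisenbergUnit_mul (x y t x' y' t' : R) :
    heisenbergUnit x y t * heisenbergUnit x' y' t' =
      heisenbergUnit (x + x') (y + y') (t + t' + x * y') :=
  Units.ext (heisenbergMatrix_mul ..)

theorem heisenbergUnit_inv (x y t : R) :
    (heisenbergUnit x y t)⁻¹ = heisenbergUnit (-x) (-y) (x * y - t) :=
  Units.ext rfl

theorem heisenbergUnit_pow (x y t : R) (n : ℕ) :
    heisenbergUnit x y t ^ n = heisenbergUnit (n * x) (n * y) (n * t + n.choose 2 * (x * y)) :=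
  Units.ext (by rw [Units.val_pow_eq_pow_val]; exact heisenbergMatrix_pow ..)

theorem heisenbergUnit_inj {x y t x' y' t' : R} :
    heisenbergUnit x y t = heisenbergUnit x' y' t' ↔ x = x' ∧ y = y' ∧ t = t' :=
  Units.ext_iff.trans heisenbergMatrix_inj

theorem commutatorElement_heisenbergUnit (x y t x' y' t' : R) :
    ⁅heisenbergUnit x y t, heisenbergUnit x' y' t'⁆ = heisenbergUnit 0 0 (x * y' - x' * y) := by
  rw [commutatorElement_def, heisenbergUnit_inv, heisenbergUnit_inv, heisenbergUnit_mul,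
    heisenbergUnit_mul, heisenbergUnit_mul, heisenbergUnit_inj]
  exact ⟨by ring, by ring, by ring⟩

variable (R) in
def heisenbergSubgroup : Subgroup (Matrix (Fin 3) (Fin 3) R)ˣ where
  carrier := {g | ∃ x y t, g = heisenbergUnit x y t}
  mul_mem' := by
    rintro _ _ ⟨x, y, t, rfl⟩ ⟨x', y', t', rfl⟩
    exact ⟨_, _, _, heisenbergUnit_mul ..⟩
  one_mem' := ⟨0, 0, 0, Units.ext heisenbergMatrix_zero.symm⟩
  inv_mem' := by
    rintro _ ⟨x, y, t, rfl⟩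
    exact ⟨_, _, _, heisenbergUnit_inv ..⟩

end Heisenberg

theorem heisenbergUnit_pow_ne_center {n : ℕ} (hn : 2 ≤ n) (x y t : ℤ) :
    heisenbergUnit x y t ^ n ≠ heisenbergUnit 0 0 1 := by
  rw [heisenbergUnit_pow, Ne, heisenbergUnit_inj]
  rintro ⟨hx, -, ht⟩
  have hn₀ : (n : ℤ) ≠ 0 := by positivity
  obtain rfl : x = 0 := (mul_eq_zero.mp hx).resolve_left hn₀
  have : (n : ℤ) ≤ 1 := Int.le_of_dvd one_pos ⟨t, by simpa using ht.symm⟩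
  omega

theorem stmt_5 :
    ¬ ∃ (z : FreeGroup (Fin 2)) (n : ℕ), 2 ≤ n ∧
      FreeGroup.of 0 * FreeGroup.of 1 * (FreeGroup.of 0)⁻¹ * (FreeGroup.of 1)⁻¹ = z ^ n := by
  rintro ⟨z, n, hn, hz⟩
  let φ := FreeGroup.lift ![heisenbergUnit (1 : ℤ) 0 0, heisenbergUnit 0 1 0]
  have hφ : φ.range ≤ heisenbergSubgroup ℤ := FreeGroup.range_lift_le <| by
    rintro _ ⟨i, rfl⟩
    fin_cases i <;> exact ⟨_, _, _, rfl⟩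
  obtain ⟨x, y, t, hzt⟩ := hφ ⟨z, rfl⟩
  have hcomm := commutatorElement_heisenbergUnit (1 : ℤ) 0 0 0 1 0
  rw [← commutatorElement_def] at hz
  apply heisenbergUnit_pow_ne_center hn x y t
  rw [← hzt, ← map_pow, ← hz, map_commutatorElement]
  simpa [φ] using hcomm
end
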